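/- arXiv:2409.06614 — 9 statements merged into one kernel-verified Lean document; each statement's English description precedes it below -/
import Mathlib

section
/- Multiple-issue QV is independent of irrelevant alternatives: let s : Ω → ℤ be the totals of a QV election in which s_ω ≥ s_φ for two outcomes ω, φ (so ω's probability of being elected is at least φ's). Extend the outcome set by a new outcome ψ with any total s_ψ ∈ ℤ, keeping the totals of all outcomes in Ω unchanged. Then in the extended election the probability that ω is elected, namely 1/|W| if ω ∈ W = argmax totals and 0 otherwise, is still at least the probability that φ is elected. -/
/-- Multiple-issue QV is independent of irrelevant alternatives: if `s φ ≤ s ω` in an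
election with totals `s : Ω → ℤ`, and a new outcome `ψ` (modelled as `none : Option Ω`)
with arbitrary total `sψ` is introduced while the totals of all outcomes in `Ω` are
unchanged, then the probability that `ω` is elected (namely `1/|W|` if `ω` is in the
argmax set `W`, and `0` otherwise) is still at least the probability that `φ` is elected. -/
theorem qv_iia {Ω : Type*} [Fintype Ω] [DecidableEq Ω] (s : Ω → ℤ) (ω φ : Ω)
    (h : s φ ≤ s ω) (sψ : ℤ) :
    letI s' : Option Ω → ℤ := fun γ => γ.elim sψ s
    letI W : Finset (Option Ω) :=
      Finset.univ.filter (fun γ => ∀ δ : Option Ω, s' δ ≤ s' γ)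
    (if some φ ∈ W then (W.card : ℝ)⁻¹ else 0) ≤
      (if some ω ∈ W then (W.card : ℝ)⁻¹ else 0) := by
  set s' : Option Ω → ℤ := fun γ => γ.elim sψ s with hs'
  set W : Finset (Option Ω) :=
    Finset.univ.filter (fun γ => ∀ δ : Option Ω, s' δ ≤ s' γ) with hW
  by_cases hφ : some φ ∈ W
  · have hφ' : ∀ δ : Option Ω, s' δ ≤ s' (some φ) := (Finset.mem_filter.mp hφ).2
    have hω : some ω ∈ W :=
      Finset.mem_filter.mpr ⟨Finset.mem_univ _, fun δ => le_trans (hφ' δ) h⟩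
    simp [hφ, hω]
  · simp only [hφ, if_neg, if_false]
    split <;> positivity
end

section
/- No-budget multiple-issue QV fails the no-favourite-betrayal criterion: let N = {1,2}, Ω = {ω, φ, ψ}, α = 1, agent 1's utilities u¹ = (0, 900, 910) (so ψ is 1's sincere favourite), and agent 2's fixed ballot v² = (10, 7, −100). Writing U¹(σ) = (1/|W|)∑_{γ∈W} u¹_γ − (σ_ω² + σ_φ² + σ_ψ²) for 1's utility under ballot σ ∈ ℤ³, where W = argmax of the totals (10+σ_ω, 7+σ_φ, −100+σ_ψ), the following hold: (a) the ballot σ = (0, 4, 0) makes φ the unique winner and yields U¹ = 900 − 16 = 884; (b) for every ballot σ ∈ ℤ³ under which ψ is a possible winner (i.e., −100+σ_ψ ≥ 10+σ_ω and −100+σ_ψ ≥ 7+σ_φ), the cost satisfies σ_ω² + σ_φ² + σ_ψ² > 910 and hence U¹(σ) < 0 < 884. Therefore agent 1's best response rates another outcome (φ) strictly ahead of its sincere favourite ψ. -/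
/-- Agent 1's utility in the no-budget QV election with `u¹ = (0, 900, 910)`,
agent 2's fixed ballot `v² = (10, 7, −100)` and `α = 1`: the expected utility of
the possible-winner set (each member elected with probability `1/|W|`) minus the
quadratic payment. -/
noncomputable def qvUtil4 (σ : Fin 3 → ℤ) : ℝ :=
  letI u : Fin 3 → ℝ := ![0, 900, 910]
  letI t : Fin 3 → ℤ := fun γ => ![10, 7, -100] γ + σ γ
  letI W : Finset (Fin 3) := Finset.univ.filter (fun γ => ∀ δ : Fin 3, t δ ≤ t γ)
  (W.card : ℝ)⁻¹ * (∑ γ ∈ W, u γ) - ∑ γ : Fin 3, ((σ γ : ℝ)) ^ 2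

lemma qvUtil4_neg (σ : Fin 3 → ℤ) (h : 910 < ∑ γ : Fin 3, (σ γ) ^ 2) :
    qvUtil4 σ < 0 := by
  unfold qvUtil4
  have hpay : (910 : ℝ) < ∑ γ : Fin 3, ((σ γ : ℝ)) ^ 2 := by exact_mod_cast h
  set W : Finset (Fin 3) := Finset.univ.filter
    (fun γ => ∀ δ : Fin 3, ![10, 7, -100] δ + σ δ ≤ ![10, 7, -100] γ + σ γ) with hW
  have hsum : ∑ γ ∈ W, (![0, 900, 910] : Fin 3 → ℝ) γ ≤ W.card * 910 := by
    calc ∑ γ ∈ W, (![0, 900, 910] : Fin 3 → ℝ) γ ≤ ∑ γ ∈ W, (910 : ℝ) := by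
          apply Finset.sum_le_sum
          intro i _
          fin_cases i <;> norm_num
      _ = W.card * 910 := by rw [Finset.sum_const]; ring
  have havg : (W.card : ℝ)⁻¹ * (∑ γ ∈ W, (![0, 900, 910] : Fin 3 → ℝ) γ) ≤ 910 := by
    rcases Nat.eq_zero_or_pos W.card with h0 | hpos
    · simp [h0]
    · have hc : (0:ℝ) < (W.card : ℝ) := by exact_mod_cast hpos
      rw [inv_mul_le_iff₀ hc]
      linarith [hsum]
  linarith

/-- No-budget multiple-issue QV fails no-favourite-betrayal: with `u¹ = (0,900,910)`
(sincere favourite `ψ = 2`) and `v² = (10,7,−100)`, (a) the ballot `(0,4,0)` makes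
`φ = 1` the unique winner and yields utility `900 − 16 = 884`; (b) any ballot making
`ψ` a possible winner costs more than `910` and hence yields negative utility,
which is less than `884`. So agent 1's best response rates `φ` strictly ahead of `ψ`. -/
theorem qv_no_budget_favourite_betrayal :
    (letI σ : Fin 3 → ℤ := ![0, 4, 0]
     (Finset.univ.filter
        (fun γ : Fin 3 => ∀ δ : Fin 3,
          ![10, 7, -100] δ + σ δ ≤ ![10, 7, -100] γ + σ γ) = {1}) ∧
     qvUtil4 σ = 884) ∧
    (∀ σ : Fin 3 → ℤ,
      10 + σ 0 ≤ -100 + σ 2 → 7 + σ 1 ≤ -100 + σ 2 →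
      (910 < ∑ γ : Fin 3, (σ γ) ^ 2) ∧ qvUtil4 σ < 0 ∧ qvUtil4 σ < 884) := by
  have hfil : Finset.univ.filter
        (fun γ : Fin 3 => ∀ δ : Fin 3,
          ![10, 7, -100] δ + (![0, 4, 0] : Fin 3 → ℤ) δ ≤
            ![10, 7, -100] γ + (![0, 4, 0] : Fin 3 → ℤ) γ) = {1} := by decide
  refine ⟨⟨hfil, ?_⟩, ?_⟩
  · unfold qvUtil4
    rw [hfil]
    simp [Fin.sum_univ_three]
    norm_num
  · intro σ h0 h1
    have hc : 910 < ∑ γ : Fin 3, (σ γ) ^ 2 := by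
      rw [Fin.sum_univ_three]
      nlinarith [sq_nonneg (σ 2 + σ 0), sq_nonneg (σ 1)]
    have hneg := qvUtil4_neg σ hc
    exact ⟨hc, hneg, by linarith⟩
end

section
/- Abstention can be a best response in no-budget QV: let N = {A, B}, Ω = {X, Y}, α = 1, agent A's utilities u^A = (40, 30), and agent B's fixed ballot v^B = (−5, 5). Then for every ballot σ ∈ ℤ², agent A's utility U^A(σ) = (1/|W|)∑_{γ∈W} u^A_γ − (σ_X² + σ_Y²), where W is the argmax of the totals (−5+σ_X, 5+σ_Y), satisfies U^A(σ) ≤ 30 = U^A((0,0)); i.e., casting no votes is a best response for A. -/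
/-- Agent A's utility in the no-budget QV election with `u^A = (40, 30)`, agent B's
fixed ballot `v^B = (−5, 5)` and `α = 1`: the expected utility of the possible-winner
set (each member elected with probability `1/|W|`) minus the quadratic payment. -/
noncomputable def qvUtil6 (σ : Fin 2 → ℤ) : ℝ :=
  letI u : Fin 2 → ℝ := ![40, 30]
  letI t : Fin 2 → ℤ := fun γ => ![-5, 5] γ + σ γ
  letI W : Finset (Fin 2) := Finset.univ.filter (fun γ => ∀ δ : Fin 2, t δ ≤ t γ)
  (W.card : ℝ)⁻¹ * (∑ γ ∈ W, u γ) - ∑ γ : Fin 2, ((σ γ : ℝ)) ^ 2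

lemma qvUtil6_eval (σ : Fin 2 → ℤ) :
    qvUtil6 σ =
      (letI t : Fin 2 → ℤ := fun γ => ![-5, 5] γ + σ γ
       letI W : Finset (Fin 2) := Finset.univ.filter (fun γ => ∀ δ : Fin 2, t δ ≤ t γ)
       (W.card : ℝ)⁻¹ * (∑ γ ∈ W, (![40, 30] : Fin 2 → ℝ) γ))
        - ((σ 0 : ℝ) ^ 2 + (σ 1 : ℝ) ^ 2) := by
  unfold qvUtil6
  simp [Fin.sum_univ_two]

/-- Abstention can be a best response in no-budget QV: with `u^A = (40, 30)` and
`v^B = (−5, 5)`, every ballot `σ ∈ ℤ²` of agent A yields utility at most `30`,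
which is exactly the utility of casting no votes at all. -/
theorem qv_abstention_best_response :
    (∀ σ : Fin 2 → ℤ, qvUtil6 σ ≤ 30) ∧ qvUtil6 (fun _ => 0) = 30 := by
  constructor
  · intro σ
    rw [qvUtil6_eval]
    set a := σ 0 with ha
    set b := σ 1 with hb
    have ha2 : (0:ℝ) ≤ (a:ℝ)^2 := sq_nonneg _
    have hb2 : (0:ℝ) ≤ (b:ℝ)^2 := sq_nonneg _
    rcases lt_trichotomy (-5 + a) (5 + b) with h | h | h
    · have hW : (Finset.univ.filter (fun γ : Fin 2 =>
          ∀ δ : Fin 2, ((![-5,5] : Fin 2 → ℤ) δ + σ δ) ≤ ((![-5,5] : Fin 2 → ℤ) γ + σ γ)))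
          = {1} := by
        ext γ
        fin_cases γ <;>
          simp [Fin.forall_fin_two, ← ha, ← hb] <;> omega
      simp only [hW]
      simp
      linarith
    · have hab : a = b + 10 := by omega
      have hW : (Finset.univ.filter (fun γ : Fin 2 =>
          ∀ δ : Fin 2, ((![-5,5] : Fin 2 → ℤ) δ + σ δ) ≤ ((![-5,5] : Fin 2 → ℤ) γ + σ γ)))
          = Finset.univ := by
        ext γ
        fin_cases γ <;>
          simp [Fin.forall_fin_two, ← ha, ← hb] <;> omega
      simp only [hW]
      rw [Fin.sum_univ_two]
      have hR : (a:ℝ) = (b:ℝ) + 10 := by exact_mod_cast congrArg (Int.cast : ℤ → ℝ) hab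
      have : (a:ℝ)^2 + (b:ℝ)^2 ≥ 50 := by nlinarith [sq_nonneg ((b:ℝ) + 5)]
      simp [Matrix.cons_val_zero, Matrix.cons_val_one]
      norm_num
      linarith
    · have hab : (b:ℝ) + 11 ≤ (a:ℝ) := by
        have : b + 11 ≤ a := by omega
        exact_mod_cast this
      have hW : (Finset.univ.filter (fun γ : Fin 2 =>
          ∀ δ : Fin 2, ((![-5,5] : Fin 2 → ℤ) δ + σ δ) ≤ ((![-5,5] : Fin 2 → ℤ) γ + σ γ)))
          = {0} := by
        ext γ
        fin_cases γ <;>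
          simp [Fin.forall_fin_two, ← ha, ← hb] <;> omega
      simp only [hW]
      have : (a:ℝ)^2 + (b:ℝ)^2 ≥ 60 := by nlinarith [sq_nonneg ((a:ℝ) + b)]
      simp
      linarith
  · rw [qvUtil6_eval]
    have hW : (Finset.univ.filter (fun γ : Fin 2 =>
        ∀ δ : Fin 2, ((![-5,5] : Fin 2 → ℤ) δ + (0:ℤ)) ≤ ((![-5,5] : Fin 2 → ℤ) γ + (0:ℤ))))
        = {1} := by
      ext γ
      fin_cases γ <;> simp [Fin.forall_fin_two]
    simp only [hW]
    simp
end

section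
/- Opposing-votes cancellation yields strictly-beneficial collusion: let C be a finite set of agents and v : C → ℤ their votes on a single outcome, and suppose both positive and negative votes are present, i.e., there exist i, j ∈ C with v_i > 0 and v_j < 0. Then there exists a redistribution x : C → ℤ such that (1) the total is preserved: ∑_{i∈C} x_i = ∑_{i∈C} v_i; (2) every agent pays no more: |x_i| ≤ |v_i| (equivalently x_i² ≤ v_i²) for all i ∈ C; and (3) at least one agent pays strictly less: |x_{c}| < |v_{c}| for some c ∈ C. Moreover, if ∑_{i∈C} v_i ≥ 0 then x can be chosen with x_i ≥ 0 for all i (the weaker direction of votes is eliminated). -/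
/-- Helper: if `0 ≤ t ≤ ∑ c in s, f c` with all `f c` nonnegative on `s`, there is
`g` with `0 ≤ g c ≤ f c` on `s` and `∑ c in s, g c = t`. -/
lemma exists_shrink {C : Type*} [DecidableEq C] (s : Finset C) :
    ∀ (f : C → ℤ), (∀ c ∈ s, 0 ≤ f c) → ∀ t : ℤ, 0 ≤ t → t ≤ ∑ c ∈ s, f c →
    ∃ g : C → ℤ, (∀ c ∈ s, 0 ≤ g c ∧ g c ≤ f c) ∧ (∑ c ∈ s, g c) = t := by
  induction s using Finset.cons_induction with
  | empty =>
    intro f _ t ht0 ht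
    simp only [Finset.sum_empty] at ht
    exact ⟨f, by simp, by simp [le_antisymm ht ht0]⟩
  | cons a s ha ih =>
    intro f hf t ht0 ht
    have hfa : 0 ≤ f a := hf a (Finset.mem_cons_self a s)
    have hfs : ∀ c ∈ s, 0 ≤ f c := fun c hc => hf c (Finset.mem_cons.2 (Or.inr hc))
    set t₁ := min t (∑ c ∈ s, f c) with ht₁
    have ht₁0 : 0 ≤ t₁ := le_min ht0 (Finset.sum_nonneg hfs)
    have ht₁le : t₁ ≤ ∑ c ∈ s, f c := min_le_right _ _
    obtain ⟨g, hg, hgsum⟩ := ih f hfs t₁ ht₁0 ht₁le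
    refine ⟨Function.update g a (t - t₁), ?_, ?_⟩
    · intro c hc
      rcases Finset.mem_cons.1 hc with rfl | hc
      · rw [Function.update_self]
        constructor
        · omega
        · rw [Finset.sum_cons] at ht
          omega
      · have hne : c ≠ a := fun h => ha (h ▸ hc)
        rw [Function.update_of_ne hne]
        exact hg c hc
    · rw [Finset.sum_cons, Function.update_self]
      have hrest : ∑ c ∈ s, Function.update g a (t - t₁) c = ∑ c ∈ s, g c :=
        Finset.sum_congr rfl (fun c hc =>
          Function.update_of_ne (fun h : c = a => ha (h ▸ hc)) _ _)
      rw [hrest, hgsum]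
      omega

/-- Opposing-votes cancellation yields strictly-beneficial collusion: if a coalition
`C`'s votes `v : C → ℤ` on a single outcome contain both a positive and a negative
vote, then there is a redistribution `x` that (1) preserves the total number of
votes, (2) makes no member pay more (`|x c| ≤ |v c|`), (3) makes at least one member
pay strictly less, and moreover, if the total is nonnegative, `x` can be chosen
nonnegative (the weaker, negative direction of votes is eliminated). -/
theorem qv_opposing_votes_cancellation {C : Type*} [Fintype C]
    (v : C → ℤ) (i j : C) (hi : 0 < v i) (hj : v j < 0) :
    ∃ x : C → ℤ,
      (∑ c : C, x c) = (∑ c : C, v c) ∧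
      (∀ c : C, |x c| ≤ |v c|) ∧
      (∃ c : C, |x c| < |v c|) ∧
      ((0 ≤ ∑ c : C, v c) → ∀ c : C, 0 ≤ x c) := by
  classical
  set S := ∑ c : C, v c with hS
  rcases le_or_gt 0 S with hS0 | hS0
  · -- nonnegative total: cancel all negative votes
    have hle : S ≤ ∑ c : C, max (v c) 0 :=
      Finset.sum_le_sum (fun c _ => le_max_left _ _)
    obtain ⟨g, hg, hgsum⟩ := exists_shrink Finset.univ (fun c => max (v c) 0)
      (fun c _ => le_max_right _ _) S hS0 hle
    refine ⟨g, hgsum, ?_, ⟨j, ?_⟩, fun _ c => (hg c (Finset.mem_univ c)).1⟩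
    · intro c
      have := hg c (Finset.mem_univ c)
      have : |g c| = g c := abs_of_nonneg this.1
      rw [this]
      calc g c ≤ max (v c) 0 := (hg c (Finset.mem_univ c)).2
        _ ≤ |v c| := by rcases le_or_gt 0 (v c) with h | h <;> simp [abs_of_nonneg, abs_of_neg, h] <;> omega
    · have h := hg j (Finset.mem_univ j)
      have hmax : max (v j) 0 = 0 := max_eq_right hj.le
      rw [abs_of_nonneg h.1]
      have : g j = 0 := le_antisymm (hmax ▸ h.2) h.1
      rw [this]
      exact abs_pos.2 hj.ne
  · -- negative total: cancel all positive votes, work with -v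
    have hS0' : 0 ≤ ∑ c : C, -v c := by
      rw [Finset.sum_neg_distrib]; omega
    have hle : ∑ c : C, -v c ≤ ∑ c : C, max (-v c) 0 :=
      Finset.sum_le_sum (fun c _ => le_max_left _ _)
    obtain ⟨g, hg, hgsum⟩ := exists_shrink Finset.univ (fun c => max (-v c) 0)
      (fun c _ => le_max_right _ _) _ hS0' hle
    refine ⟨fun c => -g c, ?_, ?_, ⟨i, ?_⟩, fun h => absurd h (not_le.2 hS0)⟩
    · have h1 : (∑ c : C, (fun c => -g c) c) = -∑ c : C, g c := by simp
      have h2 : ∑ c : C, -v c = -∑ c : C, v c := by simp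
      rw [h1, hgsum, h2, neg_neg]
    · intro c
      have h := hg c (Finset.mem_univ c)
      rw [abs_neg, abs_of_nonneg h.1]
      calc g c ≤ max (-v c) 0 := h.2
        _ ≤ |v c| := by rcases le_or_gt 0 (v c) with h | h <;> simp [abs_of_nonneg, abs_of_neg, h] <;> omega
    · have h := hg i (Finset.mem_univ i)
      have hmax : max (-v i) 0 = 0 := max_eq_right (by omega)
      have : g i = 0 := le_antisymm (hmax ▸ h.2) h.1
      rw [abs_neg, this]
      simpa using abs_pos.2 hi.ne'
end

section
/- Cycle collusion theorem: let v : N × Ω → ℤ be a strategy profile with all votes nonnegative, and suppose there exist k ≥ 2 pairwise distinct outcomes ω_1, …, ω_k ∈ Ω and pairwise distinct agents i_1, …, i_k ∈ N such that v(i_j, ω_j) < v(i_j, ω_{j+1}) for every j (indices modulo k), with v(i_j, ω_j) < v(i_j, ω_{j+1}) − 1 for at least one j (a strictly beneficial edge of the claimed preference graph). Then there exists x : N × Ω → ℤ such that (1) ∑_{i∈N} x(i,ω) = ∑_{i∈N} v(i,ω) for every ω ∈ Ω; (2) ∑_{ω∈Ω} x(i,ω)² ≤ ∑_{ω∈Ω}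 v(i,ω)² for every i ∈ N; (3) ∑_{ω∈Ω} x(i,ω)² < ∑_{ω∈Ω} v(i,ω)² for at least one i; and (4) x(i,·) = v(i,·) for every agent i ∉ {i_1, …, i_k}. (A witness is x(i_j, ω_j) = v(i_j, ω_j)+1 and x(i_j, ω_{j+1}) = v(i_j, ω_{j+1})−1 for each j, all other entries unchanged.) -/
/-- Cycle collusion theorem: if all votes are nonnegative and the claimed preference
graph of the profile `v` contains a (simple) cycle `ω 0 →^{i 0} ω 1 →^{i 1} ⋯ → ω 0`
through `k ≥ 2` pairwise distinct outcomes and pairwise distinct agents, i.e.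
`v (i j) (ω j) < v (i j) (ω (j+1 mod k))` for all `j`, with at least one strictly
beneficial edge `v (i j) (ω j) < v (i j) (ω (j+1 mod k)) − 1`, then there is a
redistribution `x` of the coalition's votes that preserves every per-outcome total,
makes no agent pay more, makes at least one agent pay strictly less, and leaves the
ballots of all agents outside the coalition unchanged. -/
theorem qv_cycle_collusion {N Ω : Type*} [Fintype N] [Fintype Ω]
    (v : N → Ω → ℤ) (hnn : ∀ (a : N) (φ : Ω), 0 ≤ v a φ)
    (k : ℕ) (hk : 2 ≤ k) (ω : Fin k → Ω) (i : Fin k → N)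
    (hωinj : Function.Injective ω) (hiinj : Function.Injective i)
    (hedge : ∀ j : Fin k,
      v (i j) (ω j) < v (i j) (ω ⟨(j.1 + 1) % k, Nat.mod_lt _ (by omega)⟩))
    (hstrict : ∃ j : Fin k,
      v (i j) (ω j) < v (i j) (ω ⟨(j.1 + 1) % k, Nat.mod_lt _ (by omega)⟩) - 1) :
    ∃ x : N → Ω → ℤ,
      (∀ φ : Ω, (∑ a : N, x a φ) = ∑ a : N, v a φ) ∧
      (∀ a : N, (∑ φ : Ω, (x a φ) ^ 2) ≤ ∑ φ : Ω, (v a φ) ^ 2) ∧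
      (∃ a : N, (∑ φ : Ω, (x a φ) ^ 2) < ∑ φ : Ω, (v a φ) ^ 2) ∧
      (∀ a : N, (∀ j : Fin k, a ≠ i j) → x a = v a) := by
  classical
  have hkpos : 0 < k := by omega
  set nxt : Fin k → Fin k := fun j => ⟨(j.1 + 1) % k, Nat.mod_lt _ hkpos⟩ with hnxtdef
  have hmod : ∀ m : ℕ, m < k → (m + 1) % k = if m + 1 = k then 0 else m + 1 := by
    intro m hm
    split
    · next h => rw [h, Nat.mod_self]
    · exact Nat.mod_eq_of_lt (by omega)
  have hnxt_inj : Function.Injective nxt := by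
    intro a b h
    have ha := a.2; have hb := b.2
    have h' : (a.1 + 1) % k = (b.1 + 1) % k := congrArg Fin.val h
    rw [hmod a.1 ha, hmod b.1 hb] at h'
    apply Fin.ext
    split at h' <;> split at h' <;> omega
  have hnxt_bij : Function.Bijective nxt := Finite.injective_iff_bijective.1 hnxt_inj
  have hnxt_ne : ∀ j : Fin k, nxt j ≠ j := by
    intro j h
    have hval : (j.1 + 1) % k = j.1 := congrArg Fin.val h
    have hj := j.2
    rw [hmod j.1 j.2] at hval
    split at hval <;> omega
  have hωne : ∀ j : Fin k, ω (nxt j) ≠ ω j := fun j h => hnxt_ne j (hωinj h)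
  set d : N → Ω → ℤ := fun a φ => ∑ j : Fin k,
      if a = i j then ((if φ = ω j then (1:ℤ) else 0) - (if φ = ω (nxt j) then 1 else 0))
      else 0 with hd
  have hdi : ∀ j : Fin k, ∀ φ : Ω,
      d (i j) φ = (if φ = ω j then (1:ℤ) else 0) - (if φ = ω (nxt j) then 1 else 0) := by
    intro j φ
    rw [hd]
    simp only
    rw [Finset.sum_eq_single j]
    · simp
    · intro j' _ hne
      exact if_neg (fun h => hne (hiinj h).symm)
    · simp
  have hdz : ∀ a : N, (∀ j : Fin k, a ≠ i j) → ∀ φ : Ω, d a φ = 0 := by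
    intro a ha φ
    rw [hd]
    exact Finset.sum_eq_zero (fun j _ => if_neg (ha j))
  have hcost : ∀ j : Fin k, (∑ φ : Ω, (v (i j) φ + d (i j) φ) ^ 2)
      = (∑ φ : Ω, (v (i j) φ) ^ 2)
        + (2 * (v (i j) (ω j) - v (i j) (ω (nxt j)) + 1)) := by
    intro j
    have hpt : ∀ φ : Ω, (v (i j) φ + d (i j) φ) ^ 2 = (v (i j) φ) ^ 2
        + ((if φ = ω j then 2 * v (i j) (ω j) + 1 else 0)
          + (if φ = ω (nxt j) then 1 - 2 * v (i j) (ω (nxt j)) else 0)) := by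
      intro φ
      rw [hdi]
      by_cases h1 : φ = ω j
      · have h2 : φ ≠ ω (nxt j) := by rw [h1]; exact fun h => hωne j h.symm
        subst h1; simp [h2]; ring
      · by_cases h2 : φ = ω (nxt j)
        · subst h2; simp [h1, hωne j]; ring
        · simp [h1, h2]
    rw [Finset.sum_congr rfl (fun φ _ => hpt φ), Finset.sum_add_distrib,
      Finset.sum_add_distrib]
    simp only [Finset.sum_ite_eq', Finset.mem_univ, if_true]
    ring
  refine ⟨fun a φ => v a φ + d a φ, ?_, ?_, ?_, ?_⟩
  · intro φ
    rw [Finset.sum_add_distrib]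
    have hzero : (∑ a : N, d a φ) = 0 := by
      rw [hd]
      simp only
      rw [Finset.sum_comm]
      have h1 : ∀ j : Fin k,
          (∑ a : N, if a = i j then
            ((if φ = ω j then (1:ℤ) else 0) - (if φ = ω (nxt j) then 1 else 0)) else 0)
          = (if φ = ω j then (1:ℤ) else 0) - (if φ = ω (nxt j) then 1 else 0) := by
        intro j
        rw [Finset.sum_ite_eq']
        simp
      rw [Finset.sum_congr rfl (fun j _ => h1 j), Finset.sum_sub_distrib]
      have hre : (∑ j : Fin k, (if φ = ω (nxt j) then (1:ℤ) else 0))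
          = ∑ j : Fin k, (if φ = ω j then (1:ℤ) else 0) :=
        Fintype.sum_bijective nxt hnxt_bij _ _ (fun j => rfl)
      rw [hre, sub_self]
    rw [hzero, add_zero]
  · intro a
    by_cases h : ∃ j : Fin k, a = i j
    · obtain ⟨j, rfl⟩ := h
      rw [hcost j]
      have he : v (i j) (ω j) < v (i j) (ω (nxt j)) := hedge j
      linarith
    · push_neg at h
      have hz := hdz a h
      simp [hz]
  · obtain ⟨j0, hj0⟩ := hstrict
    refine ⟨i j0, ?_⟩
    rw [hcost j0]
    have he : v (i j0) (ω j0) < v (i j0) (ω (nxt j0)) - 1 := hj0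
    linarith
  · intro a ha
    funext φ
    show v a φ + d a φ = v a φ
    rw [hdz a ha φ, add_zero]
end

section
/- Canonical goal strategies dominate arbitrary deviations in no-budget QV: fix agent i, the other agents' totals s : Ω → ℤ on a finite outcome set Ω, utilities u^i : Ω → ℝ, and α > 0. For a ballot σ ∈ ℤ^Ω let t_ω = s_ω + σ_ω, W(σ) = argmax_ω t_ω, and V + 1 = max_ω t_ω. Define the canonical ballot σ* by σ*_ω = V + 1 − s_ω if ω ∈ W(σ); σ*_ω = V − s_ω if ω ∉ W(σ) and s_ω > V; and σ*_ω = 0 otherwise. Then σ* produces the same possible-winner set, W(σ*) = W(σ), and costs no more, ∑_ω (σ*_ω)² ≤ ∑_ω σ_ω²; consequently U^i(σ*) ≥ U^i(σ), where U^i(σ) = (1/|W(σ)|)∑_{ω∈W(σ)} u^i_ω − α∑_ω σ_ω². -/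
/-- Canonical goal strategies dominate arbitrary deviations in no-budget QV: with the
other agents' totals `s`, a ballot `σ`, totals `t ω = s ω + σ ω`, possible-winner set
`W = argmax t` and `V + 1 = max t`, the canonical ballot `σ*` (bring every `ω ∈ W` to
`V + 1` total votes, bring every other outcome with `s ω > V` down to `V`, and cast no
votes otherwise) produces the same possible-winner set, costs no more, and hence
yields at least as much utility `U(σ) = (1/|W|) ∑_{ω∈W} u ω − α ∑_ω σ_ω²`. -/
theorem qv_canonical_dominates {Ω : Type*} [Fintype Ω] [Nonempty Ω] [DecidableEq Ω]
    (s : Ω → ℤ) (u : Ω → ℝ) (α : ℝ) (hα : 0 < α) (σ : Ω → ℤ) :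
    letI t : Ω → ℤ := fun ω => s ω + σ ω
    letI W : Finset Ω := Finset.univ.filter (fun ω => ∀ δ : Ω, t δ ≤ t ω)
    letI V : ℤ := Finset.univ.sup' Finset.univ_nonempty t - 1
    letI σstar : Ω → ℤ := fun ω =>
      if ω ∈ W then V + 1 - s ω else if V < s ω then V - s ω else 0
    letI tstar : Ω → ℤ := fun ω => s ω + σstar ω
    letI Wstar : Finset Ω := Finset.univ.filter (fun ω => ∀ δ : Ω, tstar δ ≤ tstar ω)
    Wstar = W ∧
    (∑ ω : Ω, (σstar ω) ^ 2) ≤ (∑ ω : Ω, (σ ω) ^ 2) ∧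
    (W.card : ℝ)⁻¹ * (∑ ω ∈ W, u ω) - α * (∑ ω : Ω, ((σ ω : ℝ)) ^ 2) ≤
      (Wstar.card : ℝ)⁻¹ * (∑ ω ∈ Wstar, u ω) - α * (∑ ω : Ω, ((σstar ω : ℝ)) ^ 2) := by

  beta_reduce
  set t : Ω → ℤ := fun ω => s ω + σ ω with ht
  set W : Finset Ω := Finset.univ.filter (fun ω => ∀ δ : Ω, t δ ≤ t ω) with hWdef
  set V : ℤ := Finset.univ.sup' Finset.univ_nonempty t - 1 with hV
  set σstar : Ω → ℤ := fun ω =>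
      if ω ∈ W then V + 1 - s ω else if V < s ω then V - s ω else 0 with hσstar
  set tstar : Ω → ℤ := fun ω => s ω + σstar ω with htstar
  set Wstar : Finset Ω := Finset.univ.filter (fun ω => ∀ δ : Ω, tstar δ ≤ tstar ω) with hWstar
  have hle : ∀ δ, t δ ≤ V + 1 := by
    intro δ
    have := Finset.le_sup' t (Finset.mem_univ δ)
    omega
  obtain ⟨ω0, -, hω0⟩ := Finset.exists_mem_eq_sup' (Finset.univ_nonempty (α := Ω)) t
  have hω0V : t ω0 = V + 1 := by omega
  have hmemW : ∀ ω, ω ∈ W ↔ ∀ δ : Ω, t δ ≤ t ω := by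
    intro ω; simp [W]
  have htW : ∀ ω ∈ W, t ω = V + 1 := by
    intro ω hω
    have h1 := (hmemW ω).1 hω ω0
    have h2 := hle ω
    omega
  have htnW : ∀ ω, ω ∉ W → t ω ≤ V := by
    intro ω hω
    by_contra h
    exact hω ((hmemW ω).2 (fun δ => by have := hle δ; omega))
  have hsstar : ∀ ω ∈ W, σstar ω = σ ω := by
    intro ω hω
    have := htW ω hω
    simp only [σstar, if_pos hω, t] at *
    omega
  have htsW : ∀ ω ∈ W, tstar ω = V + 1 := by
    intro ω hω
    have := hsstar ω hω
    have := htW ω hω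
    simp only [tstar, this]
    simp only [tstar, t] at *
    omega
  have htsnW : ∀ ω, ω ∉ W → tstar ω ≤ V := by
    intro ω hω
    simp only [tstar, σstar, if_neg hω]
    split <;> omega
  have hWeq : Wstar = W := by
    ext ω
    simp only [Wstar, Finset.mem_filter, Finset.mem_univ, true_and]
    constructor
    · intro h
      by_contra hω
      have h1 := htsnW ω hω
      have h2 := htsW ω0 ((hmemW ω0).2 (fun δ => by have := hle δ; omega))
      have := h ω0
      omega
    · intro hω δ
      have h2 := htsW ω hω
      by_cases hδ : δ ∈ W
      · have := htsW δ hδ; omega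
      · have := htsnW δ hδ; omega
  have hcost : (∑ ω : Ω, (σstar ω) ^ 2) ≤ (∑ ω : Ω, (σ ω) ^ 2) := by
    apply Finset.sum_le_sum
    intro ω _
    by_cases hω : ω ∈ W
    · rw [hsstar ω hω]
    · have ht := htnW ω hω
      simp only [σstar, if_neg hω]
      have hσ : σ ω = t ω - s ω := by simp [t]
      split
      · nlinarith [sq_nonneg (σ ω - (V - s ω))]
      · positivity
  refine ⟨hWeq, hcost, ?_⟩
  rw [hWeq]
  have h1 : (∑ ω : Ω, ((σstar ω : ℝ)) ^ 2) ≤ (∑ ω : Ω, ((σ ω : ℝ)) ^ 2) := by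
    have := hcost
    exact_mod_cast this
  have := mul_le_mul_of_nonneg_left h1 hα.le
  linarith
end

section
/- The optimal negative-vote set W⁻ is independent of W⁺: fix α > 0, outcomes {1,…,n} with the other agents' totals s : {1,…,n} → ℝ and utilities u : {1,…,n} → ℝ, an integer m ∈ {0,…,n}, a set W⁺ ⊆ {n'} \ {1,…,m} (outcomes with s_ω ≤ V), and V ∈ ℝ. For A ⊆ {1,…,m} let U(V, A ∪ W⁺) = (1/w)∑_{ω∈A∪W⁺} u_ω − α[∑_{ω∈A∪W⁺}(s_ω − (V+1))² + ∑_{ω∈{1,…,m}\A}(s_ω − V)²], where w = |A| + |W⁺|. Then for any two subsets A, A' ⊆ {1,…,m} with |A| = |A'|, U(V, A ∪ W⁺) − U(V, A' ∪ W⁺) = ∑_{ω∈A} f(ω) − ∑_{ω∈A'} f(ω), where f(ω) = u_ω/w + 2α s_ω. Consequently, among all subsets of {1,…,m} of a given size, the one maximizing U consists of the outcomes with the largest values of f, independently of the contents of W⁺ and of V. -/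
/-- The optimal negative-vote set `W⁻` is independent of `W⁺`: with outcomes `Fin n`
(the first `m` being those whose totals exceed the threshold `V`), a fixed set
`W⁺` of outcomes with index `≥ m`, and utility
`U(W) = (1/|W|) ∑_{ω∈W} u ω − α[∑_{ω∈W} (s ω − (V+1))² + ∑_{ω<m, ω∉W} (s ω − V)²]`,
for any two subsets `A, A'` of the first `m` outcomes with `|A| = |A'|` one has
`U(A ∪ W⁺) − U(A' ∪ W⁺) = ∑_{ω∈A} f ω − ∑_{ω∈A'} f ω` where
`f ω = u ω / w + 2 α s ω` and `w = |A| + |W⁺|`. Consequently, among all subsets of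
`{ω | ω < m}` of a given size, the one maximizing `U` consists of the outcomes with
the largest values of `f`, independently of the contents of `W⁺` and of `V`. -/
theorem qv_negative_set_independent {n : ℕ} (α : ℝ) (hα : 0 < α)
    (s u : Fin n → ℝ) (m : ℕ) (hm : m ≤ n)
    (Wpos : Finset (Fin n)) (hWpos : ∀ ω ∈ Wpos, m ≤ ω.1) (V : ℝ)
    (A A' : Finset (Fin n))
    (hA : ∀ ω ∈ A, ω.1 < m) (hA' : ∀ ω ∈ A', ω.1 < m)
    (hcard : A.card = A'.card) :
    letI low : Finset (Fin n) := Finset.univ.filter (fun ω => ω.1 < m)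
    letI U : Finset (Fin n) → ℝ := fun W =>
      (W.card : ℝ)⁻¹ * (∑ ω ∈ W, u ω) -
        α * ((∑ ω ∈ W, (s ω - (V + 1)) ^ 2) + ∑ ω ∈ low \ W, (s ω - V) ^ 2)
    letI w : ℕ := A.card + Wpos.card
    letI f : Fin n → ℝ := fun ω => u ω / w + 2 * α * s ω
    U (A ∪ Wpos) - U (A' ∪ Wpos) = (∑ ω ∈ A, f ω) - ∑ ω ∈ A', f ω := by
  set low : Finset (Fin n) := Finset.univ.filter (fun ω => ω.1 < m) with hlow
  set w : ℕ := A.card + Wpos.card with hw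
  set f : Fin n → ℝ := fun ω => u ω / w + 2 * α * s ω with hf
  set U : Finset (Fin n) → ℝ := fun W =>
      (W.card : ℝ)⁻¹ * (∑ ω ∈ W, u ω) -
        α * ((∑ ω ∈ W, (s ω - (V + 1)) ^ 2) + ∑ ω ∈ low \ W, (s ω - V) ^ 2) with hU
  have key : ∀ B : Finset (Fin n), (∀ ω ∈ B, ω.1 < m) → B.card = A.card →
      U (B ∪ Wpos) = (w : ℝ)⁻¹ * (∑ ω ∈ B, u ω) + (w : ℝ)⁻¹ * (∑ ω ∈ Wpos, u ω)
        - α * (∑ ω ∈ B, ((s ω - (V + 1)) ^ 2 - (s ω - V) ^ 2))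
        - α * (∑ ω ∈ Wpos, (s ω - (V + 1)) ^ 2)
        - α * (∑ ω ∈ low, (s ω - V) ^ 2) := by
    intro B hB hBc
    have hdisj : Disjoint B Wpos := by
      rw [Finset.disjoint_left]
      intro ω h1 h2
      exact absurd (hWpos ω h2) (not_le.mpr (hB ω h1))
    have hsub : B ⊆ low := fun ω h => Finset.mem_filter.mpr ⟨Finset.mem_univ ω, hB ω h⟩
    have hcup : (B ∪ Wpos).card = w := by
      rw [Finset.card_union_of_disjoint hdisj, hBc]
    have hsd : low \ (B ∪ Wpos) = low \ B := by
      ext ω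
      simp only [Finset.mem_sdiff, Finset.mem_union, Finset.mem_filter, Finset.mem_univ,
        true_and, hlow]
      constructor
      · rintro ⟨h1, h2⟩; exact ⟨h1, fun h => h2 (Or.inl h)⟩
      · rintro ⟨h1, h2⟩
        exact ⟨h1, fun h => by
          rcases h with h | h
          · exact h2 h
          · exact absurd (hWpos ω h) (not_le.mpr h1)⟩
    have hsum : ∑ ω ∈ low \ B, (s ω - V) ^ 2
        = ∑ ω ∈ low, (s ω - V) ^ 2 - ∑ ω ∈ B, (s ω - V) ^ 2 :=
      Finset.sum_sdiff_eq_sub hsub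
    simp only [hU, hcup, hsd, Finset.sum_union hdisj, hsum, Finset.sum_sub_distrib]
    ring
  rw [key A hA rfl, key A' hA' hcard.symm]
  have hexp : ∀ B : Finset (Fin n),
      (w : ℝ)⁻¹ * (∑ ω ∈ B, u ω) - α * (∑ ω ∈ B, ((s ω - (V + 1)) ^ 2 - (s ω - V) ^ 2))
        = (∑ ω ∈ B, f ω) - α * (2 * V + 1) * B.card := by
    intro B
    have : ∀ ω ∈ B, f ω - α * (2 * V + 1)
        = (w : ℝ)⁻¹ * u ω - α * ((s ω - (V + 1)) ^ 2 - (s ω - V) ^ 2) := by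
      intro ω _
      simp only [hf]
      field_simp
      ring
    rw [Finset.mul_sum, Finset.mul_sum, ← Finset.sum_sub_distrib,
      ← Finset.sum_congr rfl this, Finset.sum_sub_distrib, Finset.sum_const,
      nsmul_eq_mul]
    ring
  have h1 := hexp A
  have h2 := hexp A'
  rw [sub_sub_sub_cancel_right, sub_sub_sub_cancel_right]
  have : (w:ℝ)⁻¹ * (∑ ω ∈ A, u ω) + (w:ℝ)⁻¹ * (∑ ω ∈ Wpos, u ω)
      - α * (∑ ω ∈ A, ((s ω - (V + 1)) ^ 2 - (s ω - V) ^ 2))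
      - ((w:ℝ)⁻¹ * (∑ ω ∈ A', u ω) + (w:ℝ)⁻¹ * (∑ ω ∈ Wpos, u ω)
      - α * (∑ ω ∈ A', ((s ω - (V + 1)) ^ 2 - (s ω - V) ^ 2)))
      = ((w:ℝ)⁻¹ * (∑ ω ∈ A, u ω) - α * (∑ ω ∈ A, ((s ω - (V + 1)) ^ 2 - (s ω - V) ^ 2)))
      - ((w:ℝ)⁻¹ * (∑ ω ∈ A', u ω) - α * (∑ ω ∈ A', ((s ω - (V + 1)) ^ 2 - (s ω - V) ^ 2))) := by
    ring
  rw [this, h1, h2, hcard]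
  ring
end

section
/- Correctness of the fixed-budget dynamic-programming recurrence: let u : {1,…,M} → ℝ and take, leave : {1,…,M} → ℕ, and for n ∈ {0,…,M}, p ∈ {0,…,n}, b ∈ ℕ define F(n, p, b) = max{ ∑_{ω∈S} u_ω : S ⊆ {1,…,n}, |S| = p, ∑_{ω∈S} take(ω) + ∑_{ω∈{1,…,n}\S} leave(ω) ≤ b } (with F = −∞ when no such S exists), and F(0,0,b) = 0. Then for all n ≥ 1 and b: if p = 0, F(n, 0, b) = F(n−1, 0, b − leave(n)) when leave(n) ≤ b and −∞ otherwise; and if p ≥ 1, F(n, p, b) = max( F(n−1, p, b − leave(n)), F(n−1, p−1, b − take(n)) + u_n ), where a term is −∞ when its budget argument would be negative. -/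
/-- `qvDP u take leave n p b` is the maximum utility sum `∑_{ω∈S} u ω` over all
subsets `S ⊆ {1, …, n}` with `|S| = p` whose cost
`∑_{ω∈S} take ω + ∑_{ω∈{1,…,n}\S} leave ω` is at most `b` (and `⊥ = −∞` if no such
`S` exists). -/
noncomputable def qvDP (u : ℕ → ℝ) (take leave : ℕ → ℕ) (n p b : ℕ) : WithBot ℝ :=
  ((Finset.Icc 1 n).powerset.filter (fun S => S.card = p ∧
      (∑ ω ∈ S, take ω) + (∑ ω ∈ Finset.Icc 1 n \ S, leave ω) ≤ b)).sup
    (fun S => ((∑ ω ∈ S, u ω : ℝ) : WithBot ℝ))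

open Finset

private def Pset (t l : ℕ → ℕ) (n p b : ℕ) : Finset (Finset ℕ) :=
  (Finset.Icc 1 n).powerset.filter (fun S => S.card = p ∧
      (∑ ω ∈ S, t ω) + (∑ ω ∈ Finset.Icc 1 n \ S, l ω) ≤ b)

private lemma qvDP_eq (u : ℕ → ℝ) (t l : ℕ → ℕ) (n p b : ℕ) :
    qvDP u t l n p b = (Pset t l n p b).sup
      (fun S => ((∑ ω ∈ S, u ω : ℝ) : WithBot ℝ)) := rfl

private lemma mem_Pset {t l : ℕ → ℕ} {n p b : ℕ} {S : Finset ℕ} :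
    S ∈ Pset t l n p b ↔ S ⊆ Finset.Icc 1 n ∧ S.card = p ∧
      (∑ ω ∈ S, t ω) + (∑ ω ∈ Finset.Icc 1 n \ S, l ω) ≤ b := by
  simp [Pset, and_assoc]

private lemma icc_eq {n : ℕ} (hn : 1 ≤ n) :
    Finset.Icc 1 n = insert n (Finset.Icc 1 (n-1)) := by
  ext x; simp [Finset.mem_Icc]; omega

private lemma n_not_mem (n : ℕ) : n ∉ Finset.Icc 1 (n-1) := by
  simp [Finset.mem_Icc]; omega

private lemma part0 {t l : ℕ → ℕ} {n p b : ℕ} (hn : 1 ≤ n) :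
    (Pset t l n p b).filter (fun S => n ∉ S) =
      if l n ≤ b then Pset t l (n-1) p (b - l n) else ∅ := by
  ext S
  simp only [Finset.mem_filter, mem_Pset]
  have key : ∀ (hS : n ∉ S),
      (S ⊆ Finset.Icc 1 n ∧ S.card = p ∧
        (∑ ω ∈ S, t ω) + (∑ ω ∈ Finset.Icc 1 n \ S, l ω) ≤ b) ↔
      (S ⊆ Finset.Icc 1 (n-1) ∧ S.card = p ∧
        l n ≤ b ∧ (∑ ω ∈ S, t ω) + (∑ ω ∈ Finset.Icc 1 (n-1) \ S, l ω) ≤ b - l n) := by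
    intro hS
    have h1 : S ⊆ Finset.Icc 1 n ↔ S ⊆ Finset.Icc 1 (n-1) := by
      rw [icc_eq hn, Finset.subset_insert_iff_of_notMem hS]
    have h2 : Finset.Icc 1 n \ S = insert n (Finset.Icc 1 (n-1) \ S) := by
      rw [icc_eq hn, Finset.insert_sdiff_of_notMem _ hS]
    have h3 : (∑ ω ∈ Finset.Icc 1 n \ S, l ω)
        = l n + ∑ ω ∈ Finset.Icc 1 (n-1) \ S, l ω := by
      rw [h2, Finset.sum_insert (by simp [n_not_mem n])]
    rw [h1, h3]
    constructor
    · rintro ⟨a, c, d⟩; exact ⟨a, c, by omega, by omega⟩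
    · rintro ⟨a, c, d, e⟩; exact ⟨a, c, by omega⟩
  split_ifs with h
  · rw [mem_Pset]
    constructor
    · rintro ⟨hm, hS⟩
      exact ((key hS).mp hm).imp id (fun x => x.imp id And.right)
    · rintro ⟨a, c, d⟩
      have hS : n ∉ S := fun hin => n_not_mem n (a hin)
      exact ⟨(key hS).mpr ⟨a, c, h, d⟩, hS⟩
  · simp only [Finset.notMem_empty, iff_false]
    rintro ⟨hm, hS⟩
    exact h (((key hS).mp hm).2.2.1)

private lemma part1 {t l : ℕ → ℕ} {n p b : ℕ} (hn : 1 ≤ n) (hp : 1 ≤ p) :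
    (Pset t l n p b).filter (fun S => n ∈ S) =
      if t n ≤ b then (Pset t l (n-1) (p-1) (b - t n)).image (insert n) else ∅ := by
  have sdiff_eq : ∀ S' : Finset ℕ, n ∉ S' →
      Finset.Icc 1 n \ insert n S' = Finset.Icc 1 (n-1) \ S' := by
    intro S' hS'
    ext x
    simp only [Finset.mem_sdiff, Finset.mem_Icc, Finset.mem_insert, not_or]
    constructor
    · rintro ⟨⟨h1, h2⟩, h3, h4⟩; exact ⟨⟨h1, by omega⟩, h4⟩
    · rintro ⟨⟨h1, h2⟩, h4⟩; exact ⟨⟨h1, by omega⟩, by omega, h4⟩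
  ext S
  split_ifs with h
  · simp only [Finset.mem_filter, mem_Pset, Finset.mem_image]
    constructor
    · rintro ⟨⟨hsub, hcard, hcost⟩, hmem⟩
      refine ⟨S.erase n, ?_, Finset.insert_erase hmem⟩
      have hne : n ∉ S.erase n := Finset.notMem_erase n S
      have hSeq : S = insert n (S.erase n) := (Finset.insert_erase hmem).symm
      refine ⟨?_, ?_, ?_⟩
      · intro x hx
        have hxn : x ≠ n := Finset.ne_of_mem_erase hx
        have := hsub (Finset.mem_of_mem_erase hx)
        simp only [Finset.mem_Icc] at this ⊢; omega
      · rw [Finset.card_erase_of_mem hmem, hcard]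
      · have hsum : (∑ ω ∈ S, t ω) = t n + ∑ ω ∈ S.erase n, t ω := by
          conv_lhs => rw [hSeq]
          rw [Finset.sum_insert hne]
        have hd : Finset.Icc 1 n \ S = Finset.Icc 1 (n-1) \ S.erase n := by
          conv_lhs => rw [hSeq]
          exact sdiff_eq _ hne
        rw [hd] at hcost
        omega
    · rintro ⟨S', hS', rfl⟩
      obtain ⟨hsub, hcard, hcost⟩ := hS'
      have hnS' : n ∉ S' := fun hin => n_not_mem n (hsub hin)
      refine ⟨⟨?_, ?_, ?_⟩, Finset.mem_insert_self n S'⟩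
      · intro x hx
        rcases Finset.mem_insert.mp hx with rfl | hx'
        · simp [Finset.mem_Icc]; omega
        · have := hsub hx'
          simp only [Finset.mem_Icc] at this ⊢; omega
      · rw [Finset.card_insert_of_notMem hnS', hcard]; omega
      · rw [Finset.sum_insert hnS', sdiff_eq _ hnS']
        omega
  · simp only [Finset.mem_filter, mem_Pset, Finset.notMem_empty, iff_false]
    rintro ⟨⟨hsub, hcard, hcost⟩, hmem⟩
    apply h
    have : t n ≤ ∑ ω ∈ S, t ω := Finset.single_le_sum (fun _ _ => Nat.zero_le _) hmem
    omega

/-- Correctness of the fixed-budget dynamic-programming recurrence: `F(0,0,b) = 0`;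
for `n ≥ 1` and `p = 0`, `F(n,0,b) = F(n−1,0,b−leave n)` when `leave n ≤ b` and `−∞`
otherwise; and for `1 ≤ p ≤ n`,
`F(n,p,b) = max (F(n−1,p,b−leave n)) (F(n−1,p−1,b−take n) + u n)`, where a term is
`−∞` whenever its budget argument would be negative. -/
theorem qv_dp_recurrence (u : ℕ → ℝ) (take leave : ℕ → ℕ) :
    (∀ b : ℕ, qvDP u take leave 0 0 b = (0 : ℝ)) ∧
    (∀ n b : ℕ, 1 ≤ n →
      qvDP u take leave n 0 b =
        if leave n ≤ b then qvDP u take leave (n - 1) 0 (b - leave n) else ⊥) ∧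
    (∀ n p b : ℕ, 1 ≤ n → 1 ≤ p → p ≤ n →
      qvDP u take leave n p b =
        max (if leave n ≤ b then qvDP u take leave (n - 1) p (b - leave n) else ⊥)
          (if take n ≤ b then
              qvDP u take leave (n - 1) (p - 1) (b - take n) + ((u n : ℝ) : WithBot ℝ)
            else ⊥)) := by
  have split : ∀ n p b : ℕ, 1 ≤ n → qvDP u take leave n p b =
      ((Pset take leave n p b).filter (fun S => n ∉ S)).sup
        (fun S => ((∑ ω ∈ S, u ω : ℝ) : WithBot ℝ)) ⊔
      ((Pset take leave n p b).filter (fun S => n ∈ S)).sup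
        (fun S => ((∑ ω ∈ S, u ω : ℝ) : WithBot ℝ)) := by
    intro n p b hn
    have hfe : (Pset take leave n p b).filter (fun S => n ∈ S)
        = (Pset take leave n p b).filter (fun S => ¬ n ∉ S) := by
      simp [not_not]
    rw [hfe, ← Finset.sup_union,
      Finset.filter_union_filter_not_eq (fun S => n ∉ S) (Pset take leave n p b), qvDP_eq]
  have hpart0 : ∀ n p b : ℕ, 1 ≤ n →
      ((Pset take leave n p b).filter (fun S => n ∉ S)).sup
        (fun S => ((∑ ω ∈ S, u ω : ℝ) : WithBot ℝ)) =
      if leave n ≤ b then qvDP u take leave (n-1) p (b - leave n) else ⊥ := by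
    intro n p b hn
    rw [part0 hn]
    split_ifs
    · rfl
    · simp
  refine ⟨?_, ?_, ?_⟩
  · intro b
    rw [qvDP_eq]
    have : Pset take leave 0 0 b = {∅} := by
      ext S
      simp only [mem_Pset, Finset.mem_singleton]
      constructor
      · rintro ⟨hsub, -, -⟩
        have : Finset.Icc 1 0 = (∅ : Finset ℕ) := by
          apply Finset.Icc_eq_empty; omega
        rw [this, Finset.subset_empty] at hsub
        exact hsub
      · rintro rfl
        simp
    rw [this]
    simp
  · intro n b hn
    rw [split n 0 b hn, hpart0 n 0 b hn]
    have h1 : ((Pset take leave n 0 b).filter (fun S => n ∈ S)) = ∅ := by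
      ext S
      simp only [Finset.mem_filter, mem_Pset, Finset.notMem_empty, iff_false]
      rintro ⟨⟨-, hcard, -⟩, hmem⟩
      exact Finset.notMem_empty n (Finset.card_eq_zero.mp hcard ▸ hmem)
    rw [h1]
    simp
  · intro n p b hn hp hpn
    rw [split n p b hn, hpart0 n p b hn, part1 hn hp]
    have h2 : ((if take n ≤ b then
          (Pset take leave (n-1) (p-1) (b - take n)).image (insert n) else ∅).sup
        (fun S => ((∑ ω ∈ S, u ω : ℝ) : WithBot ℝ))) =
        (if take n ≤ b then
            qvDP u take leave (n - 1) (p - 1) (b - take n) + ((u n : ℝ) : WithBot ℝ)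
          else ⊥) := by
      split_ifs with h
      · rw [Finset.sup_image, qvDP_eq]
        have hcomp : ∀ S' ∈ Pset take leave (n-1) (p-1) (b - take n),
            ((fun S => ((∑ ω ∈ S, u ω : ℝ) : WithBot ℝ)) ∘ insert n) S' =
            ((∑ ω ∈ S', u ω : ℝ) : WithBot ℝ) + ((u n : ℝ) : WithBot ℝ) := by
          intro S' hS'
          rw [mem_Pset] at hS'
          have hnS' : n ∉ S' := fun hin => n_not_mem n (hS'.1 hin)
          simp only [Function.comp_apply]
          rw [Finset.sum_insert hnS', add_comm (u n)]
          push_cast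
          rfl
        rw [Finset.sup_congr rfl hcomp]
        exact (Finset.comp_sup_eq_sup_comp (· + ((u n : ℝ) : WithBot ℝ))
          (fun x y => (max_add_add_right x y _).symm)
          (WithBot.bot_add _)).symm
      · simp
    rw [h2]
end

section
/- Characterization of best responses in fixed-budget multiple-issue QV: fix a finite outcome set Ω, the other agents' totals s : Ω → ℤ, utilities u : Ω → ℝ, and budget B ∈ ℕ. For a ballot σ ∈ ℤ^Ω with ∑_ω σ_ω² ≤ B, let W(σ) = argmax_ω (s_ω + σ_ω) and U(σ) = (1/|W(σ)|)∑_{ω∈W(σ)} u_ω. Then the maximum of U over all budget-feasible ballots equals the maximum, over all integers V and all nonempty sets W ⊆ Ω satisfying the cost constraint ∑_{ω∈W} ((V+1) − s_ω)² + ∑_{ω∉W, s_ω > V} (s_ω − V)² ≤ B, of (1/|W|)∑_{ω∈W} u_ω. In particular: (a) for every such feasible pair (V, W) the canonical ballot σ with σ_ω = V+1−s_ω on W, σ_ω = V−s_ω when ω ∉ W and s_ω > V, and σ_ω = 0 otherwise, is budget-feasible and has W(σ) = W; and (b) every budget-feasible ballot σ gives rise to a feasible pair (V, W(σ)) with V +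 1 = max_ω (s_ω + σ_ω) whose cost is at most ∑_ω σ_ω². -/
/-- Characterization of best responses in fixed-budget multiple-issue QV: with the
other agents' totals `s : Ω → ℤ`, utilities `u : Ω → ℝ` and budget `B`, the supremum
of the utility `U(σ) = (1/|W(σ)|) ∑_{ω∈W(σ)} u ω` over all budget-feasible ballots
`σ` (where `W(σ) = argmax_ω (s ω + σ ω)`) equals the supremum, over all integers `V`
and nonempty sets `W ⊆ Ω` with cost
`∑_{ω∈W} ((V+1) − s ω)² + ∑_{ω∉W, s ω > V} (s ω − V)² ≤ B`, of
`(1/|W|) ∑_{ω∈W} u ω`. Moreover (a) the canonical ballot of every feasible pair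
`(V, W)` is budget-feasible and has possible-winner set exactly `W`, and (b) every
budget-feasible ballot `σ` induces the feasible pair
`(max_ω (s ω + σ ω) − 1, W(σ))` whose cost is at most `∑_ω σ_ω² ≤ B`. -/
theorem qv_fixed_budget_best_response {Ω : Type*} [Fintype Ω] [Nonempty Ω]
    [DecidableEq Ω] (s : Ω → ℤ) (u : Ω → ℝ) (B : ℕ) :
    letI Wof : (Ω → ℤ) → Finset Ω := fun σ =>
      Finset.univ.filter (fun ω => ∀ δ : Ω, s δ + σ δ ≤ s ω + σ ω)
    letI U : (Ω → ℤ) → ℝ := fun σ => ((Wof σ).card : ℝ)⁻¹ * ∑ ω ∈ Wof σ, u ω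
    letI cost : ℤ → Finset Ω → ℤ := fun V W =>
      (∑ ω ∈ W, ((V + 1) - s ω) ^ 2) +
        ∑ ω ∈ Finset.univ.filter (fun ω => ω ∉ W ∧ V < s ω), (s ω - V) ^ 2
    letI canon : ℤ → Finset Ω → Ω → ℤ := fun V W ω =>
      if ω ∈ W then V + 1 - s ω else if V < s ω then V - s ω else 0
    (sSup {r : ℝ | ∃ σ : Ω → ℤ, (∑ ω : Ω, (σ ω) ^ 2) ≤ (B : ℤ) ∧ r = U σ} =
      sSup {r : ℝ | ∃ (V : ℤ) (W : Finset Ω), W.Nonempty ∧ cost V W ≤ (B : ℤ) ∧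
        r = (W.card : ℝ)⁻¹ * ∑ ω ∈ W, u ω}) ∧
    (∀ (V : ℤ) (W : Finset Ω), W.Nonempty → cost V W ≤ (B : ℤ) →
      (∑ ω : Ω, (canon V W ω) ^ 2) ≤ (B : ℤ) ∧ Wof (canon V W) = W) ∧
    (∀ σ : Ω → ℤ, (∑ ω : Ω, (σ ω) ^ 2) ≤ (B : ℤ) →
      cost (Finset.univ.sup' Finset.univ_nonempty (fun ω => s ω + σ ω) - 1) (Wof σ) ≤
        ∑ ω : Ω, (σ ω) ^ 2) := by
  beta_reduce
  have hmem : ∀ (σ : Ω → ℤ) (ω : Ω),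
      ω ∈ Finset.univ.filter (fun ω => ∀ δ : Ω, s δ + σ δ ≤ s ω + σ ω) ↔
        ∀ δ : Ω, s δ + σ δ ≤ s ω + σ ω := by
    intro σ ω; simp
  have hWnonempty : ∀ σ : Ω → ℤ,
      (Finset.univ.filter (fun ω => ∀ δ : Ω, s δ + σ δ ≤ s ω + σ ω)).Nonempty := by
    intro σ
    obtain ⟨ω, -, hω⟩ := Finset.exists_mem_eq_sup' Finset.univ_nonempty (fun ω => s ω + σ ω)
    refine ⟨ω, (hmem σ ω).2 fun δ => ?_⟩
    calc s δ + σ δ ≤ _ := Finset.le_sup' (fun ω => s ω + σ ω) (Finset.mem_univ δ)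
    _ = s ω + σ ω := hω
  have hcanon_in : ∀ (V : ℤ) (W : Finset Ω) (ω : Ω), ω ∈ W →
      s ω + (if ω ∈ W then V + 1 - s ω else if V < s ω then V - s ω else 0) = V + 1 := by
    intro V W ω h
    rw [if_pos h]; ring
  have hcanon_out : ∀ (V : ℤ) (W : Finset Ω) (ω : Ω), ω ∉ W →
      s ω + (if ω ∈ W then V + 1 - s ω else if V < s ω then V - s ω else 0) ≤ V := by
    intro V W ω h
    rw [if_neg h]
    split_ifs with h2 <;> omega
  have hsum : ∀ (V : ℤ) (W : Finset Ω),
      (∑ ω : Ω, (if ω ∈ W then V + 1 - s ω else if V < s ω then V - s ω else 0) ^ 2) =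
      (∑ ω ∈ W, ((V + 1) - s ω) ^ 2) +
        ∑ ω ∈ Finset.univ.filter (fun ω => ω ∉ W ∧ V < s ω), (s ω - V) ^ 2 := by
    intro V W
    rw [← Finset.sum_filter_add_sum_filter_not Finset.univ (fun ω => ω ∈ W)]
    have hfW : Finset.univ.filter (fun ω => ω ∈ W) = W := by ext ω; simp
    congr 1
    · rw [hfW]
      exact Finset.sum_congr rfl fun ω hω => by rw [if_pos hω]
    · have step1 : ∑ ω ∈ Finset.univ.filter (fun ω => ¬ ω ∈ W),
          (if ω ∈ W then V + 1 - s ω else if V < s ω then V - s ω else 0) ^ 2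
          = ∑ ω ∈ Finset.univ.filter (fun ω => ¬ ω ∈ W),
          (if V < s ω then (s ω - V) ^ 2 else 0) := by
        refine Finset.sum_congr rfl fun ω hω => ?_
        rw [Finset.mem_filter] at hω
        rw [if_neg hω.2]
        split_ifs with h2
        · ring
        · ring
      rw [step1, ← Finset.sum_filter, Finset.filter_filter]
  have parta : ∀ (V : ℤ) (W : Finset Ω), W.Nonempty →
      ((∑ ω ∈ W, ((V + 1) - s ω) ^ 2) +
        ∑ ω ∈ Finset.univ.filter (fun ω => ω ∉ W ∧ V < s ω), (s ω - V) ^ 2) ≤ (B : ℤ) →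
      (∑ ω : Ω, (if ω ∈ W then V + 1 - s ω else if V < s ω then V - s ω else 0) ^ 2) ≤ (B : ℤ) ∧
      Finset.univ.filter (fun ω => ∀ δ : Ω,
        s δ + (if δ ∈ W then V + 1 - s δ else if V < s δ then V - s δ else 0) ≤
        s ω + (if ω ∈ W then V + 1 - s ω else if V < s ω then V - s ω else 0)) = W := by
    intro V W hW hc
    refine ⟨by rw [hsum]; exact hc, ?_⟩
    ext ω
    rw [Finset.mem_filter]
    simp only [Finset.mem_univ, true_and]
    constructor
    · intro h
      by_contra hω
      obtain ⟨δ0, hδ0⟩ := hW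
      have h1 := h δ0
      rw [hcanon_in V W δ0 hδ0] at h1
      have h2 := hcanon_out V W ω hω
      omega
    · intro hω δ
      rw [hcanon_in V W ω hω]
      by_cases hδ : δ ∈ W
      · rw [hcanon_in V W δ hδ]
      · exact le_trans (hcanon_out V W δ hδ) (by omega)
  have partb : ∀ σ : Ω → ℤ, (∑ ω : Ω, (σ ω) ^ 2) ≤ (B : ℤ) →
      ((∑ ω ∈ Finset.univ.filter (fun ω => ∀ δ : Ω, s δ + σ δ ≤ s ω + σ ω),
          (((Finset.univ.sup' Finset.univ_nonempty (fun ω => s ω + σ ω) - 1) + 1) - s ω) ^ 2) +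
        ∑ ω ∈ Finset.univ.filter (fun ω =>
            ω ∉ Finset.univ.filter (fun ω => ∀ δ : Ω, s δ + σ δ ≤ s ω + σ ω) ∧
            Finset.univ.sup' Finset.univ_nonempty (fun ω => s ω + σ ω) - 1 < s ω),
          (s ω - (Finset.univ.sup' Finset.univ_nonempty (fun ω => s ω + σ ω) - 1)) ^ 2) ≤
        ∑ ω : Ω, (σ ω) ^ 2 := by
    intro σ hσ
    set M := Finset.univ.sup' Finset.univ_nonempty (fun ω => s ω + σ ω) with hM
    set A := Finset.univ.filter (fun ω => ∀ δ : Ω, s δ + σ δ ≤ s ω + σ ω) with hA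
    have hle : ∀ ω, s ω + σ ω ≤ M := fun ω =>
      Finset.le_sup' (fun ω => s ω + σ ω) (Finset.mem_univ ω)
    have hmemW : ∀ ω, ω ∈ A ↔ s ω + σ ω = M := by
      intro ω
      rw [hA, hmem]
      constructor
      · intro h
        obtain ⟨δ, -, hδ⟩ := Finset.exists_mem_eq_sup' Finset.univ_nonempty
          (fun ω => s ω + σ ω)
        refine le_antisymm (hle ω) ?_
        calc M = s δ + σ δ := hδ
        _ ≤ s ω + σ ω := h δ
      · intro h δ; rw [h]; exact hle δ
    have e1 : ∑ ω ∈ A, ((M - 1 + 1) - s ω) ^ 2 = ∑ ω ∈ A, (σ ω) ^ 2 := by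
      refine Finset.sum_congr rfl fun ω hω => ?_
      have h := (hmemW ω).1 hω
      have h2 : M - 1 + 1 - s ω = σ ω := by omega
      rw [h2]
    have e2 : ∑ ω ∈ Finset.univ.filter (fun ω => ω ∉ A ∧ M - 1 < s ω), (s ω - (M - 1)) ^ 2
        ≤ ∑ ω ∈ Finset.univ.filter (fun ω => ω ∉ A ∧ M - 1 < s ω), (σ ω) ^ 2 := by
      refine Finset.sum_le_sum fun ω hω => ?_
      rw [Finset.mem_filter] at hω
      obtain ⟨-, hnW, hs⟩ := hω
      have h1 : s ω + σ ω ≤ M - 1 := by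
        rcases lt_or_eq_of_le (hle ω) with h | h
        · omega
        · exact absurd ((hmemW ω).2 h) hnW
      nlinarith [sq_nonneg (σ ω + (s ω - (M-1)))]
    have hdisj : Disjoint A (Finset.univ.filter (fun ω => ω ∉ A ∧ M - 1 < s ω)) :=
      Finset.disjoint_left.2 fun a ha hb => ((Finset.mem_filter.1 hb).2.1 ha)
    calc (∑ ω ∈ A, ((M - 1 + 1) - s ω) ^ 2) +
        ∑ ω ∈ Finset.univ.filter (fun ω => ω ∉ A ∧ M - 1 < s ω), (s ω - (M - 1)) ^ 2
        ≤ (∑ ω ∈ A, (σ ω) ^ 2) +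
          ∑ ω ∈ Finset.univ.filter (fun ω => ω ∉ A ∧ M - 1 < s ω), (σ ω) ^ 2 :=
          add_le_add (le_of_eq e1) e2
      _ = ∑ ω ∈ A ∪ Finset.univ.filter (fun ω => ω ∉ A ∧ M - 1 < s ω), (σ ω) ^ 2 :=
          (Finset.sum_union hdisj).symm
      _ ≤ ∑ ω : Ω, (σ ω) ^ 2 :=
          Finset.sum_le_sum_of_subset_of_nonneg (Finset.subset_univ _)
            (fun ω _ _ => sq_nonneg _)
  refine ⟨?_, parta, partb⟩
  congr 1
  ext r
  simp only [Set.mem_setOf_eq]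
  constructor
  · rintro ⟨σ, hσ, rfl⟩
    exact ⟨_, _, hWnonempty σ, le_trans (partb σ hσ) hσ, rfl⟩
  · rintro ⟨V, W, hW, hc, rfl⟩
    obtain ⟨h1, h2⟩ := parta V W hW hc
    refine ⟨fun ω => if ω ∈ W then V + 1 - s ω else if V < s ω then V - s ω else 0, h1, ?_⟩
    rw [h2]
end
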